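/- Let ψ be the binary morphism with ψ(0) = 0110101100101100101001 and ψ(1) = 1001010011010011010110. Then ψ preserves cubefreeness, and moreover, if w is a cubefree binary word and p is a nonempty prefix of w, then ψ(p) is a delicate cubefree binary word. -/
import Mathlib


/-- A cube is a word of the form XXX with X nonempty. -/
def IsCube {α : Type*} (w : List α) : Prop :=
  ∃ X : List α, X ≠ [] ∧ w = X ++ X ++ X

/-- A word contains a cube if some factor (contiguous subword) of it is a cube. -/
def HasCube {α : Type*} (w : List α) : Prop :=
  ∃ u, u <:+: w ∧ IsCube u

/-- A word is cubefree if none of its factors is a cube. -/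
def CubeFree {α : Type*} (w : List α) : Prop := ¬ HasCube w

/-- A delicate cubefree binary word: a nonempty cubefree word over {0,1}
such that changing any one of its letters to the other letter creates a cube. -/
def DelicateCubeFree (w : List (Fin 2)) : Prop :=
  w ≠ [] ∧ CubeFree w ∧
    ∀ (i : ℕ) (h : i < w.length) (a : Fin 2), a ≠ w.get ⟨i, h⟩ → HasCube (w.set i a)

/-- Apply the binary morphism determined by letter images `h` to a word. -/
def applyMorphism {α : Type*} (h : α → List α) (w : List α) : List α := w.flatMap h

/-- The binary morphism ψ with ψ(0) = 0110101100101100101001 and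
ψ(1) = 1001010011010011010110. -/
def psi : Fin 2 → List (Fin 2) := fun a =>
  if a = 0 then [0,1,1,0,1,0,1,1,0,0,1,0,1,1,0,0,1,0,1,0,0,1]
  else [1,0,0,1,0,1,0,0,1,1,0,1,0,0,1,1,0,1,0,1,1,0]

def seg (n i l : ℕ) : ℕ := n / 2 ^ i % 2 ^ l

def HasCubeN (n len L : ℕ) : Prop :=
  ∃ i < len, ∃ l < L + 1, 0 < l ∧ i + 3 * l ≤ len ∧
    seg n i (2 * l) = seg n (i + l) (2 * l)

instance (n len L : ℕ) : Decidable (HasCubeN n len L) := by unfold HasCubeN; infer_instance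

def enc : List (Fin 2) → ℕ
  | [] => 0
  | a :: t => a.val + 2 * enc t

lemma enc_lt (w : List (Fin 2)) : enc w < 2 ^ w.length := by
  induction w with
  | nil => simp [enc]
  | cons a t ih => have := a.isLt; simp only [enc, List.length_cons, pow_succ]; omega

lemma enc_drop (w : List (Fin 2)) (i : ℕ) : enc (w.drop i) = enc w / 2 ^ i := by
  induction i generalizing w with
  | zero => simp
  | succ i ih =>
    cases w with
    | nil => simp [enc, Nat.zero_div]
    | cons a t =>
      have := a.isLt
      have h1 : (a :: t).drop (i+1) = t.drop i := rfl
      rw [h1, ih]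
      have h2 : enc (a :: t) = a.val + 2 * enc t := rfl
      rw [h2, pow_succ]
      rw [show (2:ℕ) ^ i * 2 = 2 * 2 ^ i by ring, ← Nat.div_div_eq_div_mul]
      congr 1
      omega

lemma enc_take (w : List (Fin 2)) (l : ℕ) : enc (w.take l) = enc w % 2 ^ l := by
  induction l generalizing w with
  | zero => simp [enc, Nat.mod_one]
  | succ l ih =>
    cases w with
    | nil => simp [enc, Nat.zero_mod]
    | cons a t =>
      have := a.isLt
      have h1 : (a :: t).take (l+1) = a :: t.take l := rfl
      rw [h1]
      have h2 : enc (a :: t.take l) = a.val + 2 * enc (t.take l) := rfl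
      have h3 : enc (a :: t) = a.val + 2 * enc t := rfl
      rw [h2, h3, ih, pow_succ]
      have h5 : enc t % 2 ^ l < 2 ^ l := Nat.mod_lt _ (by positivity)
      conv_rhs => rw [← Nat.div_add_mod (enc t) (2 ^ l)]
      rw [show a.val + 2 * (2 ^ l * (enc t / 2 ^ l) + enc t % 2 ^ l)
            = a.val + 2 * (enc t % 2 ^ l) + (2 ^ l * 2) * (enc t / 2 ^ l) by ring]
      rw [Nat.add_mul_mod_self_left]
      exact (Nat.mod_eq_of_lt (by omega)).symm

lemma enc_inj : ∀ (u v : List (Fin 2)), u.length = v.length → enc u = enc v → u = v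
  | [], [], _, _ => rfl
  | a :: u, b :: v, hl, he => by
    have ha := a.isLt; have hb := b.isLt
    have h1 : enc (a :: u) = a.val + 2 * enc u := rfl
    have h2 : enc (b :: v) = b.val + 2 * enc v := rfl
    have hab : a.val = b.val := by omega
    have huv : enc u = enc v := by omega
    have : a = b := Fin.ext hab
    simp only [List.length_cons] at hl
    rw [this, enc_inj u v (by omega) huv]


def fct {α : Type*} (w : List α) (i l : ℕ) : List α := (w.drop i).take l

lemma fct_infix {α : Type*} (w : List α) (i l : ℕ) : fct w i l <:+: w :=
  ((w.drop i).take_prefix l).isInfix.trans (w.drop_suffix i).isInfix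

lemma fct_length {α : Type*} (w : List α) (i l : ℕ) (h : i + l ≤ w.length) :
    (fct w i l).length = l := by
  simp [fct]; omega

lemma fct_add {α : Type*} (w : List α) (i j l : ℕ) :
    fct w (i + j) l = fct (w.drop i) j l := by
  simp [fct, List.drop_drop]

lemma hasCube_iff_fct {α : Type*} (w : List α) :
    HasCube w ↔ ∃ i < w.length, ∃ l < w.length + 1, 0 < l ∧ i + 3 * l ≤ w.length ∧
      fct w i l = fct w (i + l) l ∧ fct w i l = fct w (i + 2 * l) l := by
  constructor
  · rintro ⟨u, ⟨s, t, rfl⟩, X, hX, rfl⟩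
    have hX0 : 0 < X.length := List.length_pos_iff.mpr hX
    have hd : (s ++ (X ++ X ++ X) ++ t).drop s.length = X ++ X ++ X ++ t := by
      rw [List.append_assoc, List.drop_left]
    have hA : fct (s ++ (X ++ X ++ X) ++ t) s.length X.length = X := by
      simp only [fct]
      rw [hd, List.append_assoc, List.append_assoc, List.take_left]
    have hB : fct (s ++ (X ++ X ++ X) ++ t) (s.length + X.length) X.length = X := by
      simp only [fct]
      rw [← List.drop_drop, hd, List.append_assoc, List.append_assoc, List.drop_left,
        List.take_left]
    have hC : fct (s ++ (X ++ X ++ X) ++ t) (s.length + 2 * X.length) X.length = X := by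
      simp only [fct]
      rw [show s.length + 2 * X.length = s.length + X.length + X.length by ring,
        ← List.drop_drop, ← List.drop_drop, hd, List.append_assoc, List.append_assoc,
        List.drop_left, List.drop_left, List.take_left]
    refine ⟨s.length, by simp; omega, X.length, by simp; omega, hX0, by simp; omega,
      by rw [hA, hB], by rw [hA, hC]⟩
  · rintro ⟨i, hi, l, hl, hl0, hil, h1, h2⟩
    refine ⟨fct w i (3 * l), fct_infix w i (3 * l), fct w i l, ?_, ?_⟩
    · have := fct_length w i l (by omega)
      intro h; rw [h] at this; simp at this; omega
    · have e1 : fct w i (3 * l) = fct w i l ++ (fct w (i + l) l ++ fct w (i + 2 * l) l) := by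
        simp only [fct]
        rw [show 3 * l = l + (l + l) by ring, List.take_add, List.take_add,
          List.drop_drop, List.drop_drop, show i + l + l = i + 2 * l by ring]
      rw [e1, ← h1, ← h2, List.append_assoc]

lemma seg_enc (w : List (Fin 2)) (i l : ℕ) :
    seg (enc w) i l = enc (fct w i l) := by
  rw [seg, fct, enc_take, enc_drop]

lemma fct_split {α : Type*} (w : List α) (i a b : ℕ) :
    fct w i (a + b) = fct w i a ++ fct w (i + a) b := by
  simp only [fct]
  rw [List.take_add, List.drop_drop]

lemma fct_pair_iff (w : List (Fin 2)) (i l : ℕ) (hl0 : 0 < l) (hil : i + 3 * l ≤ w.length) :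
    (fct w i l = fct w (i + l) l ∧ fct w i l = fct w (i + 2 * l) l) ↔
      fct w i (2 * l) = fct w (i + l) (2 * l) := by
  have e1 : fct w i (2 * l) = fct w i l ++ fct w (i + l) l := by
    rw [show 2 * l = l + l by ring, fct_split]
  have e2 : fct w (i + l) (2 * l) = fct w (i + l) l ++ fct w (i + 2 * l) l := by
    rw [show 2 * l = l + l by ring, fct_split, Nat.add_assoc]
  constructor
  · rintro ⟨h1, h2⟩
    rw [e1, e2, ← h1, ← h2]
  · intro h
    rw [e1, e2] at h
    have L1 := fct_length w i l (by omega)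
    have L2 := fct_length w (i + l) l (by omega)
    obtain ⟨g1, g2⟩ := List.append_inj h (by omega)
    exact ⟨g1, g1.trans g2⟩

lemma hasCubeN_of_fct (w : List (Fin 2)) (i l L : ℕ) (hl0 : 0 < l) (hlL : l ≤ L)
    (hil : i + 3 * l ≤ w.length)
    (h1 : fct w i l = fct w (i + l) l) (h2 : fct w i l = fct w (i + 2 * l) l) :
    HasCubeN (enc w) w.length L := by
  refine ⟨i, by omega, l, by omega, hl0, hil, ?_⟩
  rw [seg_enc, seg_enc, (fct_pair_iff w i l hl0 hil).mp ⟨h1, h2⟩]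

lemma hasCube_of_N (w : List (Fin 2)) (L : ℕ) (h : HasCubeN (enc w) w.length L) :
    HasCube w := by
  obtain ⟨i, hi, l, hl, hl0, hil, hseg⟩ := h
  rw [seg_enc, seg_enc] at hseg
  have L1 := fct_length w i (2 * l) (by omega)
  have L2 := fct_length w (i + l) (2 * l) (by omega)
  have := (fct_pair_iff w i l hl0 hil).mpr (enc_inj _ _ (by omega) hseg)
  exact (hasCube_iff_fct w).mpr ⟨i, by omega, l, by omega, hl0, hil, this.1, this.2⟩

lemma hasCubeN_of_cube (w : List (Fin 2)) (h : HasCube w) :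
    HasCubeN (enc w) w.length w.length := by
  obtain ⟨i, hi, l, hl, hl0, hil, h1, h2⟩ := (hasCube_iff_fct w).mp h
  exact hasCubeN_of_fct w i l w.length hl0 (by omega) hil h1 h2

lemma psi_length (a : Fin 2) : (psi a).length = 22 := by fin_cases a <;> rfl

lemma psiw_length (w : List (Fin 2)) : (w.flatMap psi).length = 22 * w.length := by
  induction w with
  | nil => rfl
  | cons a t ih =>
    rw [List.flatMap_cons, List.length_append, psi_length, ih, List.length_cons]
    ring

lemma psiw_take (w : List (Fin 2)) (k : ℕ) :
    (w.take k).flatMap psi = (w.flatMap psi).take (22 * k) := by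
  rcases le_or_gt k w.length with h | h
  · conv_rhs => rw [← List.take_append_drop k w, List.flatMap_append]
    rw [show 22 * k = ((w.take k).flatMap psi).length by
      rw [psiw_length, List.length_take]; omega, List.take_left]
  · rw [List.take_of_length_le (by omega), List.take_of_length_le (by rw [psiw_length]; omega)]

lemma psiw_drop (w : List (Fin 2)) (k : ℕ) :
    (w.drop k).flatMap psi = (w.flatMap psi).drop (22 * k) := by
  rcases le_or_gt k w.length with h | h
  · conv_rhs => rw [← List.take_append_drop k w, List.flatMap_append]
    rw [show 22 * k = ((w.take k).flatMap psi).length by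
      rw [psiw_length, List.length_take]; omega, List.drop_left]
  · rw [List.drop_of_length_le (by omega), List.drop_of_length_le (by rw [psiw_length]; omega)]
    rfl

lemma psiw_block (w : List (Fin 2)) (s : ℕ) (hs : s < w.length) :
    fct (w.flatMap psi) (22 * s) 22 = psi w[s] := by
  have h1 : (w.flatMap psi).drop (22 * s) = (w.drop s).flatMap psi := (psiw_drop w s).symm
  rw [fct, h1, List.drop_eq_getElem_cons hs, List.flatMap_cons,
    show 22 = (psi w[s]).length from (psi_length _).symm, List.take_left]

lemma psiw_getElem (w : List (Fin 2)) (s r : ℕ) (hs : s < w.length) (hr : r < 22)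
    (h : 22 * s + r < (w.flatMap psi).length) :
    (w.flatMap psi)[22 * s + r] = (psi w[s])[r]'(by rw [psi_length]; omega) := by
  have hb := psiw_block w s hs
  have hfl : r < (fct (w.flatMap psi) (22 * s) 22).length := by
    rw [fct_length _ _ _ (by rw [psiw_length]; omega)]; omega
  calc (w.flatMap psi)[22 * s + r]
      = (fct (w.flatMap psi) (22 * s) 22)[r]'hfl := by
        simp only [fct, List.getElem_take, List.getElem_drop]
    _ = (psi w[s])[r]'(by rw [psi_length]; omega) := by
        congr 1 <;> rw [hb]

lemma psi_first : ∀ a : Fin 2, (psi a)[0]'(by rw [psi_length]; omega) = a := by decide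

lemma psi_last_inj : ∀ a b : Fin 2,
    (psi a)[21]'(by rw [psi_length]; omega) = (psi b)[21]'(by rw [psi_length]; omega) → a = b := by
  decide
lemma hasCube_infix {α : Type*} {u v : List α} (h : u <:+: v) (hc : HasCube u) :
    HasCube v := by
  obtain ⟨x, hx, hcx⟩ := hc
  exact ⟨x, hx.trans h, hcx⟩

lemma cubefree_infix {α : Type*} {u w : List α} (hw : CubeFree w) (h : u <:+: w) :
    CubeFree u := fun hc => hw (hasCube_infix h hc)

lemma fct_length_le {α : Type*} (w : List α) (i l : ℕ) : (fct w i l).length ≤ l := by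
  simp [fct]

lemma fct_fct {α : Type*} (z : List α) (a b c d : ℕ) (h : c + d ≤ b) :
    fct (fct z a b) c d = fct z (a + c) d := by
  simp only [fct]
  rw [List.drop_take, List.take_take, List.drop_drop]
  congr 1
  omega

lemma getElem_fct {α : Type*} (w : List α) (i l j : ℕ) (hj : j < l) (hb : i + l ≤ w.length)
    (h1 : j < (fct w i l).length) (h2 : i + j < w.length) :
    (fct w i l)[j] = w[i + j] := by
  simp [fct, List.getElem_take, List.getElem_drop]

lemma fct_eq_of_forall {α : Type*} (z : List α) (p q L : ℕ)
    (hp : p + L ≤ z.length) (hq : q + L ≤ z.length)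
    (h : ∀ j, j < L → ∀ (h1 : p + j < z.length) (h2 : q + j < z.length), z[p + j] = z[q + j]) :
    fct z p L = fct z q L := by
  apply List.ext_getElem
  · rw [fct_length _ _ _ hp, fct_length _ _ _ hq]
  · intro j hj1 hj2
    have hjL : j < L := by rwa [fct_length _ _ _ hp] at hj1
    rw [getElem_fct z p L j hjL hp hj1 (by omega),
      getElem_fct z q L j hjL hq hj2 (by omega)]
    exact h j hjL (by omega) (by omega)

lemma idx_congr {α : Type*} (z : List α) (a b : ℕ) (hab : a = b) (ha : a < z.length) :
    z[a] = z[b]'(hab ▸ ha) := by subst hab; rfl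

lemma period_pointwise (w : List (Fin 2)) (i l : ℕ) (hil : i + 3 * l ≤ w.length)
    (h1 : fct w i l = fct w (i + l) l) (h2 : fct w i l = fct w (i + 2 * l) l) :
    ∀ p, i ≤ p → p < i + 2 * l → ∀ (hp : p < w.length) (hpl : p + l < w.length),
      w[p] = w[p + l] := by
  intro p hip hp2 hp hpl
  rcases lt_or_ge p (i + l) with hc | hc
  · have hj : p - i < l := by omega
    have hL1 : p - i < (fct w i l).length := by rw [fct_length _ _ _ (by omega)]; exact hj
    have hL2 : p - i < (fct w (i + l) l).length := by
      rw [fct_length _ _ _ (by omega)]; exact hj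
    have e : (fct w i l).getD (p - i) 0 = (fct w (i + l) l).getD (p - i) 0 := by rw [h1]
    rw [List.getD_eq_getElem _ _ hL1, List.getD_eq_getElem _ _ hL2,
      getElem_fct w i l (p - i) hj (by omega) hL1 (by omega),
      getElem_fct w (i + l) l (p - i) hj (by omega) hL2 (by omega)] at e
    exact (idx_congr w p (i + (p - i)) (by omega) hp).trans
      (e.trans (idx_congr w (p + l) (i + l + (p - i)) (by omega) hpl).symm)
  · have hj : p - (i + l) < l := by omega
    have h3 : fct w (i + l) l = fct w (i + 2 * l) l := h1.symm.trans h2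
    have hL1 : p - (i + l) < (fct w (i + l) l).length := by
      rw [fct_length _ _ _ (by omega)]; exact hj
    have hL2 : p - (i + l) < (fct w (i + 2 * l) l).length := by
      rw [fct_length _ _ _ (by omega)]; exact hj
    have e : (fct w (i + l) l).getD (p - (i + l)) 0
        = (fct w (i + 2 * l) l).getD (p - (i + l)) 0 := by rw [h3]
    rw [List.getD_eq_getElem _ _ hL1, List.getD_eq_getElem _ _ hL2,
      getElem_fct w (i + l) l (p - (i + l)) hj (by omega) hL1 (by omega),
      getElem_fct w (i + 2 * l) l (p - (i + l)) hj (by omega) hL2 (by omega)] at e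
    exact (idx_congr w p (i + l + (p - (i + l))) (by omega) hp).trans
      (e.trans (idx_congr w (p + l) (i + 2 * l + (p - (i + l))) (by omega) hpl).symm)

lemma psiw_first_letter (w : List (Fin 2)) (s : ℕ) (hs : s < w.length)
    (h : 22 * s < (w.flatMap psi).length) : (w.flatMap psi)[22 * s] = w[s] := by
  have e := psiw_getElem w s 0 hs (by omega) (by omega)
  exact (idx_congr _ (22 * s) (22 * s + 0) (by omega) h).trans (e.trans (psi_first w[s]))

lemma psiw_last_letter (w : List (Fin 2)) (s s' : ℕ) (hs : s < w.length) (hs' : s' < w.length)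
    (h : 22 * s + 21 < (w.flatMap psi).length) (h' : 22 * s' + 21 < (w.flatMap psi).length)
    (he : (w.flatMap psi)[22 * s + 21] = (w.flatMap psi)[22 * s' + 21]) : w[s] = w[s'] := by
  rw [psiw_getElem w s 21 hs (by omega) (by omega),
    psiw_getElem w s' 21 hs' (by omega) (by omega)] at he
  exact psi_last_inj _ _ he

def allW : ℕ → List (List (Fin 2))
  | 0 => [[]]
  | n + 1 => (allW n).flatMap (fun v => [0 :: v, 1 :: v])

lemma mem_allW : ∀ (v : List (Fin 2)), v ∈ allW v.length
  | [] => List.mem_singleton.mpr rfl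
  | a :: t => by
    have ht := mem_allW t
    simp only [List.length_cons, allW, List.mem_flatMap]
    refine ⟨t, ht, ?_⟩
    have : a = 0 ∨ a = 1 := by omega
    rcases this with h | h <;> simp [h]

set_option maxRecDepth 20000 in
lemma chk1 : ∀ m < 5, ∀ v ∈ allW m, ¬ HasCubeN (enc v) m m →
    ¬ HasCubeN (enc (v.flatMap psi)) (22 * m) 21 := by decide

set_option maxRecDepth 20000 in
lemma chk2 : ∀ a b c : Fin 2, ∀ p < 23,
    fct (psi b ++ psi c) p 22 = psi a → p = 0 ∨ p = 22 := by decide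

set_option maxRecDepth 20000 in
lemma chk3 : ∀ a : Fin 2, ∀ r < 22, ∀ b : Fin 2, b ≠ (psi a).getD r 0 →
    HasCubeN (enc ((psi a).set r b)) 22 22 := by decide

theorem psi_preserves : ∀ w : List (Fin 2), CubeFree w → CubeFree (w.flatMap psi) := by
  intro w hw hc
  have hzl : (w.flatMap psi).length = 22 * w.length := psiw_length w
  obtain ⟨i, hi, l, hl, hl0, hil, h1, h2⟩ := (hasCube_iff_fct (w.flatMap psi)).mp hc
  rw [hzl] at hi hil hl
  rcases le_or_gt l 21 with hsmall | hbig
  · -- small cubes: land inside ψ of a ≤ 4-letter factor of w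
    obtain ⟨q, r, rfl, hr22⟩ : ∃ q r, i = 22 * q + r ∧ r < 22 :=
      ⟨i / 22, i % 22, by omega, by omega⟩
    have hvlen : (fct w q 4).length = min 4 (w.length - q) := by
      rw [fct, List.length_take, List.length_drop]
    have hvc : CubeFree (fct w q 4) := cubefree_infix hw (fct_infix w q 4)
    have hveq : (fct w q 4).flatMap psi = fct (w.flatMap psi) (22 * q) 88 := by
      rw [fct, fct, psiw_take, psiw_drop, show 22 * 4 = 88 by norm_num]
    have hqn : q < w.length := by omega
    have hr3 : r + 3 * l ≤ 22 * (fct w q 4).length := by omega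
    have hlen : ((fct w q 4).flatMap psi).length = 22 * (fct w q 4).length :=
      psiw_length _
    have key : ∀ c : ℕ, c + l ≤ 88 →
        fct ((fct w q 4).flatMap psi) c l = fct (w.flatMap psi) (22 * q + c) l := by
      intro c hc1
      rw [hveq, fct_fct _ (22 * q) 88 c l hc1]
    have e1 : fct ((fct w q 4).flatMap psi) r l = fct ((fct w q 4).flatMap psi) (r + l) l := by
      rw [key r (by omega), key (r + l) (by omega), ← Nat.add_assoc]
      exact h1
    have e2 : fct ((fct w q 4).flatMap psi) r l
        = fct ((fct w q 4).flatMap psi) (r + 2 * l) l := by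
      rw [key r (by omega), key (r + 2 * l) (by omega), ← Nat.add_assoc]
      exact h2
    have hN : HasCubeN (enc ((fct w q 4).flatMap psi)) ((fct w q 4).flatMap psi).length 21 :=
      hasCubeN_of_fct _ r l 21 hl0 hsmall (by omega) e1 e2
    rw [hlen] at hN
    exact chk1 (fct w q 4).length (by omega) (fct w q 4) (mem_allW _)
      (fun hNN => hvc (hasCube_of_N _ _ hNN)) hN
  · -- big cubes: synchronization forces 22 ∣ l, then w has a cube
    have hper := period_pointwise (w.flatMap psi) i l (by omega) h1 h2
    obtain ⟨s₁, f1, f2⟩ : ∃ s, i ≤ 22 * s ∧ 22 * s ≤ i + 21 :=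
      ⟨(i + 21) / 22, by omega, by omega⟩
    have hs₁n : s₁ < w.length := by omega
    have hblock : fct (w.flatMap psi) (22 * s₁) 22 = psi w[s₁] := psiw_block w s₁ hs₁n
    have hshift : fct (w.flatMap psi) (22 * s₁ + l) 22 = psi w[s₁] := by
      rw [← hblock]
      apply fct_eq_of_forall _ _ _ 22 (by omega) (by omega)
      intro j hj hh1 hh2
      have hp := hper (22 * s₁ + j) (by omega) (by omega) (by omega) (by omega)
      exact (idx_congr _ (22 * s₁ + l + j) (22 * s₁ + j + l) (by omega) hh1).trans hp.symm
    have hdvd : 22 ∣ l := by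
      obtain ⟨t0, r', hp0, hr'⟩ : ∃ t0 r', 22 * s₁ + l = 22 * t0 + r' ∧ r' < 22 :=
        ⟨(22 * s₁ + l) / 22, (22 * s₁ + l) % 22, by omega, by omega⟩
      rcases Nat.eq_zero_or_pos r' with hr0 | hrpos
      · exact ⟨t0 - s₁, by omega⟩
      · exfalso
        have ht0n : t0 + 2 ≤ w.length := by omega
        have hpair : fct (w.flatMap psi) (22 * t0) 44
            = psi w[t0] ++ psi (w[t0 + 1]'(by omega)) := by
          have e : fct w t0 2 = [w[t0]'(by omega), w[t0 + 1]'(by omega)] := by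
            apply List.ext_getElem
            · rw [fct_length _ _ _ (by omega)]
              rfl
            · intro n h1n h2n
              have hn2 : n < 2 := by rw [fct_length _ _ _ (by omega)] at h1n; exact h1n
              rw [getElem_fct w t0 2 n hn2 (by omega) h1n (by omega)]
              interval_cases n
              · exact idx_congr w (t0 + 0) t0 (by omega) (by omega)
              · rfl
          have e2 : fct (w.flatMap psi) (22 * t0) 44 = (fct w t0 2).flatMap psi := by
            rw [fct, fct, psiw_take, psiw_drop, show 22 * 2 = 44 by norm_num]
          rw [e2, e]
          simp [List.flatMap_cons]
        have hocc : fct (psi (w[t0]'(by omega)) ++ psi (w[t0 + 1]'(by omega))) r' 22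
            = psi w[s₁] := by
          rw [← hpair, fct_fct _ (22 * t0) 44 r' 22 (by omega), show 22 * t0 + r'
            = 22 * s₁ + l by omega]
          exact hshift
        rcases chk2 w[s₁] (w[t0]'(by omega)) (w[t0 + 1]'(by omega)) r' (by omega) hocc
          with h0 | h22 <;> omega
    obtain ⟨m, hm⟩ := hdvd
    have hm1 : 1 ≤ m := by omega
    obtain ⟨s₀, g1, g2⟩ : ∃ s, 22 * s ≤ i ∧ i < 22 * s + 22 :=
      ⟨i / 22, by omega, by omega⟩
    have hosc : ∀ s, s₀ ≤ s → s < s₀ + 2 * m → ∀ (hsn : s + m < w.length)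
        (hsn' : s < w.length), w[s] = w[s + m] := by
      intro s hs1 hs2 hsn hsn'
      rcases le_or_gt i (22 * s) with hcase | hcase
      · have hp := hper (22 * s) hcase (by omega) (by omega) (by omega)
        exact (psiw_first_letter w s hsn' (by omega)).symm.trans
          (hp.trans ((idx_congr _ (22 * s + l) (22 * (s + m)) (by omega)
            (by omega)).trans (psiw_first_letter w (s + m) hsn (by omega))))
      · have hp := hper (22 * s + 21) (by omega) (by omega) (by omega) (by omega)
        exact psiw_last_letter w s (s + m) hsn' hsn (by omega) (by omega)
          (hp.trans (idx_congr _ (22 * s + 21 + l) (22 * (s + m) + 21) (by omega) (by omega)))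
    have h3m : s₀ + 3 * m ≤ w.length := by omega
    have c1 : fct w s₀ m = fct w (s₀ + m) m := by
      apply fct_eq_of_forall w _ _ m (by omega) (by omega)
      intro j hj hh1 hh2
      exact (hosc (s₀ + j) (by omega) (by omega) (by omega) (by omega)).trans
        (idx_congr w (s₀ + j + m) (s₀ + m + j) (by omega) (by omega))
    have c2 : fct w s₀ m = fct w (s₀ + 2 * m) m := by
      apply fct_eq_of_forall w _ _ m (by omega) (by omega)
      intro j hj hh1 hh2
      have t1 := hosc (s₀ + j) (by omega) (by omega) (by omega) (by omega)
      have t2 := hosc (s₀ + j + m) (by omega) (by omega) (by omega) (by omega)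
      exact (t1.trans t2).trans
        (idx_congr w (s₀ + j + m + m) (s₀ + 2 * m + j) (by omega) (by omega))
    exact hw ((hasCube_iff_fct w).mpr ⟨s₀, by omega, m, by omega, by omega, by omega, c1, c2⟩)

theorem psi_delicate (p : List (Fin 2)) (hp : CubeFree p) (hne : p ≠ []) :
    DelicateCubeFree (p.flatMap psi) := by
  have hplen : 0 < p.length := List.length_pos_iff.mpr hne
  have hlen : (p.flatMap psi).length = 22 * p.length := psiw_length p
  refine ⟨List.ne_nil_of_length_pos (by omega), psi_preserves p hp, ?_⟩
  intro i h a hne2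
  obtain ⟨q, r, rfl, hr22⟩ : ∃ q r, i = 22 * q + r ∧ r < 22 :=
    ⟨i / 22, i % 22, by omega, by omega⟩
  have hil : 22 * q + r < 22 * p.length := by omega
  have hqp : q < p.length := by omega
  have hdec : p.flatMap psi =
      (p.take q).flatMap psi ++ (psi p[q] ++ (p.drop (q + 1)).flatMap psi) := by
    conv_lhs => rw [← List.take_append_drop q p]
    rw [List.flatMap_append, List.drop_eq_getElem_cons hqp, List.flatMap_cons]
  have hAlen : ((p.take q).flatMap psi).length = 22 * q := by
    rw [psiw_length, List.length_take]
    omega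
  have hClen : (psi p[q]).length = 22 := psi_length _
  have hget : (p.flatMap psi).get ⟨22 * q + r, h⟩ = (psi p[q]).getD r 0 := by
    rw [List.get_eq_getElem, psiw_getElem p q r hqp hr22 (by omega),
      List.getD_eq_getElem _ _ (by omega)]
  have hcube : HasCube ((psi p[q]).set r a) := by
    have hN := chk3 p[q] r hr22 a (by rw [← hget]; exact hne2)
    have hL : ((psi p[q]).set r a).length = 22 := by rw [List.length_set, hClen]
    exact hasCube_of_N _ 22 (by rw [hL]; exact hN)
  have hset : (p.flatMap psi).set (22 * q + r) a =
      (p.take q).flatMap psi ++ (((psi p[q]).set r a) ++ (p.drop (q + 1)).flatMap psi) := by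
    rw [hdec, List.set_append, if_neg (by omega), hAlen,
      show 22 * q + r - 22 * q = r by omega, List.set_append, if_pos (by omega)]
  rw [hset]
  exact hasCube_infix ⟨(p.take q).flatMap psi, (p.drop (q + 1)).flatMap psi,
    by rw [List.append_assoc]⟩ hcube


theorem psi_preserves_cubefree_and_delicate :
    (∀ w : List (Fin 2), CubeFree w → CubeFree (applyMorphism psi w)) ∧
    (∀ w p : List (Fin 2), CubeFree w → p ≠ [] → p <+: w →
      DelicateCubeFree (applyMorphism psi p)) := by
  constructor
  · exact fun w hw => psi_preserves w hw
  · intro w p hw hpne hpre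
    exact psi_delicate p (cubefree_infix hw hpre.isInfix) hpne
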